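/- arXiv:2603.13790 — 2 statements merged into one kernel-verified Lean document; each statement's English description precedes it below -/
import Mathlib

section
/- Let Q ∈ ℝ^{d×r} have full column rank r and let F ∈ ℝ^{d×t} have full column rank t. Set P := F(FᵀF)⁻¹Fᵀ and η := det(Qᵀ(I_d − P)Q). Then η/det(QᵀQ) ∈ [0,1] and ‖FᵀQ‖₂ ≥ σ_min(F) · σ_min(Q) · √(1 − (η/det(QᵀQ))^{1/r}). -/
open Matrix

/-- The spectral norm (largest singular value) of a real matrix, as the operator norm of the
induced linear map between Euclidean spaces. -/
noncomputable def specNorm {m n : ℕ} (A : Matrix (Fin m) (Fin n) ℝ) : ℝ :=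
  ‖LinearMap.toContinuousLinearMap (Matrix.toEuclideanLin A)‖

/-- The smallest singular value of a real matrix: the square root of the smallest eigenvalue of
`AᵀA` (`= AᴴA` over `ℝ`). -/
noncomputable def sigmaMin {m n : ℕ} (A : Matrix (Fin m) (Fin n) ℝ) : ℝ :=
  Real.sqrt (⨅ i, (Matrix.isHermitian_conjTranspose_mul_self A).eigenvalues i)

/-!
Write `A = QᵀQ`, `K = Qᵀ(I - P)Q` and `M = QᵀPQ = A - K`; both `K` and `M` are positive
semidefinite because `P` and `I - P` are orthogonal projections. Whitening by `S = A^{1/2}` turns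
`K` into `C = S⁻¹KS⁻¹` with `0 ≤ C ≤ I` and `det C = η / det A`, so this ratio lies in `[0, 1]`
and the smallest eigenvalue `μ` of `C` satisfies `μ ≤ (η / det A)^{1/r}`. For the corresponding
eigenvector `u`, the vector `v = S⁻¹u` has `vᵀAv = 1` and `vᵀMv = 1 - μ`. With `w = FᵀQv` one has
`vᵀMv = wᵀ(FᵀF)⁻¹w ≤ ‖w‖² / σ_min(F)²`, `‖w‖ ≤ ‖FᵀQ‖₂ ‖v‖` and `σ_min(Q)² ‖v‖² ≤ vᵀAv = 1`.
-/

open scoped MatrixOrder ComplexOrder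

lemma dotProduct_self_eq_norm_sq {n : Type*} [Fintype n] (x : n → ℝ) :
    x ⬝ᵥ x = ‖WithLp.toLp 2 x‖ ^ 2 := by
  rw [← real_inner_self_eq_norm_sq, EuclideanSpace.inner_eq_star_dotProduct]
  simp

namespace Matrix

section General

variable {m n : Type*} [Fintype m] [Fintype n]

lemma dotProduct_transpose_mul_mul_mulVec {R : Type*} [CommSemiring R] (T : Matrix m n R)
    (B : Matrix m m R) (x : n → R) :
    x ⬝ᵥ ((Tᵀ * B * T) *ᵥ x) = (T *ᵥ x) ⬝ᵥ (B *ᵥ (T *ᵥ x)) := by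
  rw [← mulVec_mulVec, ← mulVec_mulVec, dotProduct_mulVec x, vecMul_transpose]

lemma dotProduct_transpose_mul_self_mulVec {R : Type*} [CommSemiring R] (T : Matrix m n R)
    (x : n → R) : x ⬝ᵥ ((Tᵀ * T) *ᵥ x) = (T *ᵥ x) ⬝ᵥ (T *ᵥ x) := by
  rw [← mulVec_mulVec, dotProduct_mulVec, vecMul_transpose]

lemma posDef_transpose_mul_self_of_rank_eq (A : Matrix m n ℝ) (h : A.rank = Fintype.card n) :
    (Aᵀ * A).PosDef := by
  have hker : LinearMap.ker A.mulVecLin = ⊥ := by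
    have := LinearMap.finrank_range_add_finrank_ker A.mulVecLin
    rw [← Matrix.rank, h, Module.finrank_fintype_fun_eq_card, add_eq_left] at this
    exact Submodule.finrank_eq_zero.mp this
  simpa using PosDef.conjTranspose_mul_self A (LinearMap.ker_eq_bot.mp hker)

variable [DecidableEq n]

lemma isStarProjection_mul_inv_mul_transpose (F : Matrix m n ℝ) (hF : IsUnit (Fᵀ * F).det) :
    IsStarProjection (F * (Fᵀ * F)⁻¹ * Fᵀ) where
  isIdempotentElem :=
    calc F * (Fᵀ * F)⁻¹ * Fᵀ * (F * (Fᵀ * F)⁻¹ * Fᵀ)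
        = F * ((Fᵀ * F)⁻¹ * (Fᵀ * F)) * (Fᵀ * F)⁻¹ * Fᵀ := by simp only [Matrix.mul_assoc]
      _ = F * (Fᵀ * F)⁻¹ * Fᵀ := by rw [nonsing_inv_mul _ hF, Matrix.mul_one]
  isSelfAdjoint := by
    rw [isSelfAdjoint_iff, star_eq_conjTranspose, conjTranspose_eq_transpose_of_trivial,
      transpose_mul, transpose_mul, transpose_nonsing_inv, transpose_mul, transpose_transpose,
      Matrix.mul_assoc]

lemma det_inv_mul_mul_inv {K : Type*} [Field K] (S M : Matrix n n K) :
    (S⁻¹ * M * S⁻¹).det = M.det / (S * S).det := by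
  rw [det_mul, det_mul, det_mul, det_nonsing_inv, Ring.inverse_eq_inv']
  field_simp

lemma inv_mul_mul_self_mul_inv {K : Type*} [Field K] {S : Matrix n n K} (hS : IsUnit S.det) :
    S⁻¹ * (S * S) * S⁻¹ = 1 := by
  rw [← Matrix.mul_assoc, nonsing_inv_mul _ hS, Matrix.one_mul, mul_nonsing_inv _ hS]

variable {𝕜 : Type*} [RCLike 𝕜]

lemma PosDef.exists_posDef_mul_self_eq {A : Matrix n n 𝕜} (hA : A.PosDef) :
    ∃ S : Matrix n n 𝕜, S.PosDef ∧ S * S = A :=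
  ⟨CFC.sqrt A, hA.isStrictlyPositive.sqrt.posDef, CFC.sqrt_mul_sqrt_self A hA.posSemidef.nonneg⟩

lemma IsHermitian.posSemidef_cfc {A : Matrix n n 𝕜} (hA : A.IsHermitian) {f : ℝ → ℝ}
    (hf : ∀ i, 0 ≤ f (hA.eigenvalues i)) : (cfc f A).PosSemidef := by
  rw [← nonneg_iff_posSemidef]
  refine cfc_nonneg fun x hx ↦ ?_
  obtain ⟨i, rfl⟩ := hA.spectrum_real_eq_range_eigenvalues ▸ hx
  exact hf i

end General

section Real

variable {n : Type*} [Fintype n] [DecidableEq n] {A C K : Matrix n n ℝ}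

lemma IsHermitian.iInf_eigenvalues_mul_dotProduct_self_le (hA : A.IsHermitian) (x : n → ℝ) :
    (⨅ i, hA.eigenvalues i) * (x ⬝ᵥ x) ≤ x ⬝ᵥ (A *ᵥ x) := by
  set c := ⨅ i, hA.eigenvalues i
  have hsub : (A - c • 1).PosSemidef := by
    have : A - c • 1 = cfc (fun t ↦ t - c) A := by
      rw [cfc_sub _ _, cfc_id' ℝ A, cfc_const c A, Algebra.algebraMap_eq_smul_one]
    rw [this]
    exact hA.posSemidef_cfc fun i ↦ sub_nonneg.mpr (ciInf_le (Finite.bddBelow_range _) i)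
  have := hsub.dotProduct_mulVec_nonneg x
  simp only [star_trivial, sub_mulVec, smul_mulVec, one_mulVec, dotProduct_sub,
    dotProduct_smul, smul_eq_mul] at this
  linarith

lemma PosSemidef.iInf_eigenvalues_mul_dotProduct_mulVec_le (hA : A.PosSemidef) (x : n → ℝ) :
    (⨅ i, hA.1.eigenvalues i) * (x ⬝ᵥ (A *ᵥ x)) ≤ (A *ᵥ x) ⬝ᵥ (A *ᵥ x) := by
  set c := ⨅ i, hA.1.eigenvalues i
  have hsub : (A * A - c • A).PosSemidef := by
    have : A * A - c • A = cfc (fun t ↦ t * (t - c)) A := by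
      rw [cfc_mul _ _, cfc_sub _ _, cfc_id' ℝ A, cfc_const c A, Algebra.algebraMap_eq_smul_one,
        mul_sub, mul_smul_one]
    rw [this]
    exact hA.1.posSemidef_cfc fun i ↦ mul_nonneg (hA.eigenvalues_nonneg i)
      (sub_nonneg.mpr (ciInf_le (Finite.bddBelow_range _) i))
  have hAA : x ⬝ᵥ ((A * A) *ᵥ x) = (A *ᵥ x) ⬝ᵥ (A *ᵥ x) := by
    simpa [(isHermitian_iff_isSymm.mp hA.1).eq] using dotProduct_transpose_mul_self_mulVec A x
  have := hsub.dotProduct_mulVec_nonneg x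
  simp only [star_trivial, sub_mulVec, smul_mulVec, dotProduct_sub, dotProduct_smul,
    smul_eq_mul, hAA] at this
  linarith

lemma IsHermitian.eigenvectorBasis_dotProduct_self (hA : A.IsHermitian) (i : n) :
    ⇑(hA.eigenvectorBasis i) ⬝ᵥ ⇑(hA.eigenvectorBasis i) = 1 := by
  rw [dotProduct_self_eq_norm_sq]
  simp

lemma IsHermitian.eigenvectorBasis_dotProduct_mulVec (hA : A.IsHermitian) (i : n) :
    ⇑(hA.eigenvectorBasis i) ⬝ᵥ (A *ᵥ ⇑(hA.eigenvectorBasis i)) = hA.eigenvalues i := by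
  rw [hA.mulVec_eigenvectorBasis, dotProduct_smul, hA.eigenvectorBasis_dotProduct_self,
    smul_eq_mul, mul_one]

lemma IsHermitian.eigenvalues_le_one (hC : C.IsHermitian) (h : (1 - C).PosSemidef) (i : n) :
    hC.eigenvalues i ≤ 1 := by
  have := h.dotProduct_mulVec_nonneg (hC.eigenvectorBasis i)
  rwa [star_trivial, sub_mulVec, one_mulVec, dotProduct_sub, hC.eigenvectorBasis_dotProduct_self,
    hC.eigenvectorBasis_dotProduct_mulVec, sub_nonneg] at this

lemma PosSemidef.det_le_one (hC : C.PosSemidef) (h : (1 - C).PosSemidef) : C.det ≤ 1 := by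
  rw [hC.1.det_eq_prod_eigenvalues]
  exact Finset.prod_le_one (fun i _ ↦ hC.eigenvalues_nonneg i) fun i _ ↦
    hC.1.eigenvalues_le_one h i

lemma PosSemidef.exists_eigenvalues_pow_card_le_det [Nonempty n] (hC : C.PosSemidef) :
    ∃ j, hC.1.eigenvalues j ^ Fintype.card n ≤ C.det := by
  obtain ⟨j, -, hj⟩ := Finset.exists_min_image Finset.univ hC.1.eigenvalues Finset.univ_nonempty
  refine ⟨j, ?_⟩
  rw [hC.1.det_eq_prod_eigenvalues, ← Finset.card_univ, ← Finset.prod_const]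
  exact Finset.prod_le_prod (fun _ _ ↦ hC.eigenvalues_nonneg j) fun i _ ↦ by
    simpa using hj i (Finset.mem_univ i)

lemma PosSemidef.inv_mul_mul_inv {S : Matrix n n ℝ} (hS : S.PosDef) (hK : K.PosSemidef) :
    (S⁻¹ * K * S⁻¹).PosSemidef := by
  simpa [(isHermitian_iff_isSymm.mp hS.inv.1).eq] using hK.conjTranspose_mul_mul_same S⁻¹

lemma det_le_det_of_posSemidef_sub (hA : A.PosDef) (hK : K.PosSemidef)
    (hAK : (A - K).PosSemidef) : K.det ≤ A.det := by
  obtain ⟨S, hS, rfl⟩ := hA.exists_posDef_mul_self_eq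
  have hC1 : (1 - S⁻¹ * K * S⁻¹).PosSemidef := by
    rw [← inv_mul_mul_self_mul_inv hS.det_pos.ne'.isUnit, ← Matrix.sub_mul, ← Matrix.mul_sub]
    exact hAK.inv_mul_mul_inv hS
  have := (hK.inv_mul_mul_inv hS).det_le_one hC1
  rwa [det_inv_mul_mul_inv, div_le_one hA.det_pos] at this

lemma exists_dotProduct_mulVec_eq_one_le_rpow [Nonempty n] (hA : A.PosDef) (hK : K.PosSemidef) :
    ∃ v, v ⬝ᵥ (A *ᵥ v) = 1 ∧
      v ⬝ᵥ (K *ᵥ v) ≤ (K.det / A.det) ^ ((1 : ℝ) / Fintype.card n) := by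
  obtain ⟨S, hS, rfl⟩ := hA.exists_posDef_mul_self_eq
  have hC := hK.inv_mul_mul_inv hS
  obtain ⟨j, hj⟩ := hC.exists_eigenvalues_pow_card_le_det
  have hSinv : (S⁻¹)ᵀ = S⁻¹ := (isHermitian_iff_isSymm.mp hS.inv.1).eq
  refine ⟨S⁻¹ *ᵥ hC.1.eigenvectorBasis j, ?_, ?_⟩
  · rw [← dotProduct_transpose_mul_mul_mulVec, hSinv,
      inv_mul_mul_self_mul_inv hS.det_pos.ne'.isUnit, one_mulVec,
      hC.1.eigenvectorBasis_dotProduct_self]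
  · rw [← dotProduct_transpose_mul_mul_mulVec, hSinv, hC.1.eigenvectorBasis_dotProduct_mulVec,
      ← det_inv_mul_mul_inv, one_div, Real.le_rpow_inv_iff_of_pos (hC.eigenvalues_nonneg j)
        hC.det_nonneg (by exact_mod_cast Fintype.card_pos), Real.rpow_natCast]
    exact hj

end Real

end Matrix

section SingularValues

variable {m n : ℕ}

lemma mulVec_dotProduct_self_le_specNorm_sq (A : Matrix (Fin m) (Fin n) ℝ) (x : Fin n → ℝ) :
    (A *ᵥ x) ⬝ᵥ (A *ᵥ x) ≤ specNorm A ^ 2 * (x ⬝ᵥ x) := by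
  rw [dotProduct_self_eq_norm_sq, dotProduct_self_eq_norm_sq, ← mul_pow]
  have := (LinearMap.toContinuousLinearMap (toEuclideanLin A)).le_opNorm (WithLp.toLp 2 x)
  gcongr
  simpa [specNorm] using this

lemma sigmaMin_sq (A : Matrix (Fin m) (Fin n) ℝ) :
    sigmaMin A ^ 2 = ⨅ i, (isHermitian_conjTranspose_mul_self A).eigenvalues i :=
  Real.sq_sqrt (Real.iInf_nonneg (eigenvalues_conjTranspose_mul_self_nonneg A))

lemma sigmaMin_sq_mul_dotProduct_self_le (A : Matrix (Fin m) (Fin n) ℝ) (x : Fin n → ℝ) :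
    sigmaMin A ^ 2 * (x ⬝ᵥ x) ≤ (A *ᵥ x) ⬝ᵥ (A *ᵥ x) := by
  rw [sigmaMin_sq, ← dotProduct_transpose_mul_self_mulVec]
  exact (isHermitian_conjTranspose_mul_self A).iInf_eigenvalues_mul_dotProduct_self_le x

lemma sigmaMin_sq_mul_dotProduct_inv_mulVec_le (F : Matrix (Fin m) (Fin n) ℝ)
    (hF : IsUnit (Fᵀ * F).det) (w : Fin n → ℝ) :
    sigmaMin F ^ 2 * (w ⬝ᵥ ((Fᵀ * F)⁻¹ *ᵥ w)) ≤ w ⬝ᵥ w := by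
  have hw : (Fᴴ * F) *ᵥ ((Fᵀ * F)⁻¹ *ᵥ w) = w := by
    rw [conjTranspose_eq_transpose_of_trivial, mulVec_mulVec, mul_nonsing_inv _ hF, one_mulVec]
  have := (posSemidef_conjTranspose_mul_self F).iInf_eigenvalues_mul_dotProduct_mulVec_le
    ((Fᵀ * F)⁻¹ *ᵥ w)
  rw [hw, dotProduct_comm] at this
  rwa [sigmaMin_sq]

lemma specNorm_nonneg (A : Matrix (Fin m) (Fin n) ℝ) : 0 ≤ specNorm A :=
  norm_nonneg _

lemma sigmaMin_nonneg (A : Matrix (Fin m) (Fin n) ℝ) : 0 ≤ sigmaMin A :=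
  Real.sqrt_nonneg _

lemma sigmaMin_mul_sigmaMin_mul_sqrt_le_specNorm {d : ℕ} (Q : Matrix (Fin d) (Fin m) ℝ)
    (F : Matrix (Fin d) (Fin n) ℝ) (hF : IsUnit (Fᵀ * F).det) {v : Fin m → ℝ}
    (hv : v ⬝ᵥ ((Qᵀ * Q) *ᵥ v) = 1) :
    sigmaMin F * sigmaMin Q * Real.sqrt (v ⬝ᵥ ((Qᵀ * (F * (Fᵀ * F)⁻¹ * Fᵀ) * Q) *ᵥ v)) ≤
      specNorm (Fᵀ * Q) := by
  set w := (Fᵀ * Q) *ᵥ v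
  have hvw : v ⬝ᵥ ((Qᵀ * (F * (Fᵀ * F)⁻¹ * Fᵀ) * Q) *ᵥ v) = w ⬝ᵥ ((Fᵀ * F)⁻¹ *ᵥ w) := by
    rw [← dotProduct_transpose_mul_mul_mulVec]
    simp only [transpose_mul, transpose_transpose, Matrix.mul_assoc]
  have hvQ : sigmaMin Q ^ 2 * (v ⬝ᵥ v) ≤ 1 := by
    rw [← hv, dotProduct_transpose_mul_self_mulVec]
    exact sigmaMin_sq_mul_dotProduct_self_le Q v
  have hwF := sigmaMin_sq_mul_dotProduct_inv_mulVec_le F hF w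
  have hwN := mulVec_dotProduct_self_le_specNorm_sq (Fᵀ * Q) v
  have key : (sigmaMin F * sigmaMin Q) ^ 2 * (w ⬝ᵥ ((Fᵀ * F)⁻¹ *ᵥ w)) ≤
      specNorm (Fᵀ * Q) ^ 2 :=
    calc (sigmaMin F * sigmaMin Q) ^ 2 * (w ⬝ᵥ ((Fᵀ * F)⁻¹ *ᵥ w))
        = sigmaMin Q ^ 2 * (sigmaMin F ^ 2 * (w ⬝ᵥ ((Fᵀ * F)⁻¹ *ᵥ w))) := by ring
      _ ≤ sigmaMin Q ^ 2 * (specNorm (Fᵀ * Q) ^ 2 * (v ⬝ᵥ v)) :=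
          mul_le_mul_of_nonneg_left (hwF.trans hwN) (sq_nonneg _)
      _ = specNorm (Fᵀ * Q) ^ 2 * (sigmaMin Q ^ 2 * (v ⬝ᵥ v)) := by ring
      _ ≤ specNorm (Fᵀ * Q) ^ 2 := mul_le_of_le_one_right (sq_nonneg _) hvQ
  rw [hvw, ← Real.sqrt_sq (mul_nonneg (sigmaMin_nonneg F) (sigmaMin_nonneg Q)),
    ← Real.sqrt_mul (sq_nonneg _)]
  exact (Real.sqrt_le_sqrt key).trans_eq (Real.sqrt_sq (specNorm_nonneg _))

end SingularValues

/-- Let `Q ∈ ℝ^{d×r}` and `F ∈ ℝ^{d×t}` have full column rank.  With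
`P = F(FᵀF)⁻¹Fᵀ` and `η = det(Qᵀ(I − P)Q)`, we have `η/det(QᵀQ) ∈ [0,1]` and
`‖FᵀQ‖₂ ≥ σ_min(F) · σ_min(Q) · √(1 − (η/det(QᵀQ))^{1/r})`. -/
theorem specNorm_transpose_mul_ge_of_fullRank
    {d r t : ℕ} (Q : Matrix (Fin d) (Fin r) ℝ) (F : Matrix (Fin d) (Fin t) ℝ)
    (hQ : Q.rank = r) (hF : F.rank = t) :
    0 ≤ (Qᵀ * ((1 : Matrix (Fin d) (Fin d) ℝ) - F * (Fᵀ * F)⁻¹ * Fᵀ) * Q).det / (Qᵀ * Q).det ∧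
    (Qᵀ * ((1 : Matrix (Fin d) (Fin d) ℝ) - F * (Fᵀ * F)⁻¹ * Fᵀ) * Q).det / (Qᵀ * Q).det ≤ 1 ∧
    sigmaMin F * sigmaMin Q *
      Real.sqrt (1 -
        ((Qᵀ * ((1 : Matrix (Fin d) (Fin d) ℝ) - F * (Fᵀ * F)⁻¹ * Fᵀ) * Q).det /
          (Qᵀ * Q).det) ^ ((1 : ℝ) / r)) ≤
      specNorm (Fᵀ * Q) := by
  set P := F * (Fᵀ * F)⁻¹ * Fᵀ
  have hFF : (Fᵀ * F).PosDef := posDef_transpose_mul_self_of_rank_eq F (by simpa using hF)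
  have hA : (Qᵀ * Q).PosDef := posDef_transpose_mul_self_of_rank_eq Q (by simpa using hQ)
  have hP := isStarProjection_mul_inv_mul_transpose F hFF.det_pos.ne'.isUnit
  have hK : (Qᵀ * (1 - P) * Q).PosSemidef := by
    simpa using (nonneg_iff_posSemidef.mp hP.one_sub_nonneg).conjTranspose_mul_mul_same Q
  have hAK : Qᵀ * Q - Qᵀ * (1 - P) * Q = Qᵀ * P * Q := by
    rw [Matrix.mul_sub, Matrix.sub_mul, Matrix.mul_one, sub_sub_cancel]
  have hM : (Qᵀ * Q - Qᵀ * (1 - P) * Q).PosSemidef := by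
    simpa [hAK] using (nonneg_iff_posSemidef.mp hP.nonneg).conjTranspose_mul_mul_same Q
  refine ⟨div_nonneg hK.det_nonneg hA.det_pos.le,
    (div_le_one hA.det_pos).mpr (det_le_det_of_posSemidef_sub hA hK hM), ?_⟩
  rcases Nat.eq_zero_or_pos r with rfl | hr
  · rw [Nat.cast_zero, div_zero, Real.rpow_zero, sub_self, Real.sqrt_zero, mul_zero]
    exact specNorm_nonneg _
  have : Nonempty (Fin r) := Fin.pos_iff_nonempty.mp hr
  obtain ⟨v, hvA, hvK⟩ := exists_dotProduct_mulVec_eq_one_le_rpow hA hK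
  rw [Fintype.card_fin] at hvK
  have hvM : 1 - ((Qᵀ * (1 - P) * Q).det / (Qᵀ * Q).det) ^ ((1 : ℝ) / r) ≤
      v ⬝ᵥ ((Qᵀ * P * Q) *ᵥ v) := by
    rw [← hAK, sub_mulVec, dotProduct_sub, hvA]
    linarith
  refine le_trans ?_ (sigmaMin_mul_sigmaMin_mul_sqrt_le_specNorm Q F hFF.det_pos.ne'.isUnit hvA)
  exact mul_le_mul_of_nonneg_left (Real.sqrt_le_sqrt hvM)
    (mul_nonneg (sigmaMin_nonneg F) (sigmaMin_nonneg Q))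
end

section
/- Let U ∈ ℝ^{d×r} and V ∈ ℝ^{d×t} have orthonormal columns, i.e. UᵀU = I_r and VᵀV = I_t. Then det(I_r − UᵀVVᵀU) ∈ [0,1] and ‖VᵀU‖₂² ≥ 1 − det(I_r − UᵀVVᵀU)^{1/r}. -/
/-!
With `B = VᵀU`, the matrix `1 - BᵀB = Uᵀ (1 - VVᵀ) U` is positive semidefinite, since `1 - VVᵀ`
is an orthogonal projection. On a unit eigenvector `v` its eigenvalue is `1 - ‖Bv‖²`, which lies
in `[1 - ‖B‖₂², 1]`. The determinant is the product of these nonnegative eigenvalues, so it lies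
in `[0, 1]`, and its `r`-th root, their geometric mean, is at least `1 - ‖B‖₂²`.
-/

open Matrix

theorem EuclideanSpace.real_norm_sq_eq_dotProduct {n : Type*} [Fintype n]
    (x : EuclideanSpace ℝ n) : ‖x‖ ^ 2 = x.ofLp ⬝ᵥ x.ofLp := by
  rw [← real_inner_self_eq_norm_sq, EuclideanSpace.inner_eq_star_dotProduct, star_trivial]

theorem le_prod_rpow_one_div_card {ι : Type*} [Fintype ι] [Nonempty ι] {f : ι → ℝ} {a : ℝ}
    (hf : ∀ i, 0 ≤ f i) (ha : ∀ i, a ≤ f i) :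
    a ≤ (∏ i, f i) ^ ((1 : ℝ) / Fintype.card ι) := by
  have hprod : 0 ≤ ∏ i, f i := Finset.prod_nonneg fun i _ => hf i
  rcases lt_or_ge a 0 with ha0 | ha0
  · exact ha0.le.trans (Real.rpow_nonneg hprod _)
  have hpow : a ^ Fintype.card ι ≤ ∏ i, f i := by
    rw [← Finset.card_univ, ← Finset.prod_const]
    exact Finset.prod_le_prod (fun _ _ => ha0) fun i _ => ha i
  calc a = (a ^ Fintype.card ι) ^ ((1 : ℝ) / Fintype.card ι) := by
        rw [one_div, Real.pow_rpow_inv_natCast ha0 Fintype.card_ne_zero]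
    _ ≤ _ := by gcongr

namespace Matrix

theorem posSemidef_one_sub_mul_transpose {m n : Type*} [Fintype m] [Fintype n]
    [DecidableEq m] [DecidableEq n] {V : Matrix m n ℝ} (hV : Vᵀ * V = 1) :
    (1 - V * Vᵀ).PosSemidef := by
  have hidem : (1 - V * Vᵀ)ᴴ * (1 - V * Vᵀ) = 1 - V * Vᵀ := by
    rw [conjTranspose_eq_transpose_of_trivial, transpose_sub, transpose_one, transpose_mul,
      transpose_transpose, Matrix.sub_mul, Matrix.one_mul, Matrix.mul_sub, Matrix.mul_one,
      Matrix.mul_assoc, ← Matrix.mul_assoc Vᵀ, hV, Matrix.one_mul, sub_self, sub_zero]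
  exact hidem ▸ posSemidef_conjTranspose_mul_self (1 - V * Vᵀ)

theorem posSemidef_one_sub_transpose_mul_of_orthonormal {d r t : Type*} [Fintype d]
    [Fintype r] [Fintype t] [DecidableEq d] [DecidableEq r] [DecidableEq t]
    {U : Matrix d r ℝ} {V : Matrix d t ℝ} (hU : Uᵀ * U = 1) (hV : Vᵀ * V = 1) :
    (1 - (Vᵀ * U)ᵀ * (Vᵀ * U)).PosSemidef := by
  have h := (posSemidef_one_sub_mul_transpose hV).conjTranspose_mul_mul_same U
  rwa [conjTranspose_eq_transpose_of_trivial, Matrix.mul_sub, Matrix.sub_mul, Matrix.mul_one, hU,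
    Matrix.mul_assoc, Matrix.mul_assoc, ← Matrix.mul_assoc Uᵀ, ← transpose_transpose V,
    ← transpose_mul, transpose_transpose] at h

namespace IsHermitian

variable {m n : Type*} [Fintype m] [Fintype n] [DecidableEq n] {B : Matrix m n ℝ}

theorem eigenvalues_one_sub_transpose_mul (hA : (1 - Bᵀ * B).IsHermitian) (i : n) :
    hA.eigenvalues i = 1 - ‖B.toEuclideanLin (hA.eigenvectorBasis i)‖ ^ 2 := by
  have hv : ‖hA.eigenvectorBasis i‖ ^ 2 = 1 := by
    rw [hA.eigenvectorBasis.orthonormal.1 i, one_pow]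
  rw [hA.eigenvalues_eq, sub_mulVec, one_mulVec, dotProduct_sub, ← mulVec_mulVec,
    dotProduct_mulVec, vecMul_transpose, ← hv, EuclideanSpace.real_norm_sq_eq_dotProduct,
    EuclideanSpace.real_norm_sq_eq_dotProduct]
  rfl

theorem eigenvalues_one_sub_transpose_mul_le_one (hA : (1 - Bᵀ * B).IsHermitian) (i : n) :
    hA.eigenvalues i ≤ 1 := by
  rw [eigenvalues_one_sub_transpose_mul]
  exact sub_le_self _ (sq_nonneg _)

end IsHermitian

end Matrix

theorem one_sub_sq_specNorm_le_eigenvalues {r t : ℕ} {B : Matrix (Fin t) (Fin r) ℝ}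
    (hA : (1 - Bᵀ * B).IsHermitian) (i : Fin r) :
    1 - specNorm B ^ 2 ≤ hA.eigenvalues i := by
  have hle : ‖B.toEuclideanLin (hA.eigenvectorBasis i)‖ ≤ specNorm B := by
    simpa [specNorm, hA.eigenvectorBasis.orthonormal.1 i] using
      (LinearMap.toContinuousLinearMap (toEuclideanLin B)).le_opNorm (hA.eigenvectorBasis i)
  rw [hA.eigenvalues_one_sub_transpose_mul]
  gcongr

/-- Let `U ∈ ℝ^{d×r}` and `V ∈ ℝ^{d×t}` have orthonormal columns.  Then
`det(I_r − UᵀVVᵀU) ∈ [0,1]` and `‖VᵀU‖₂² ≥ 1 − det(I_r − UᵀVVᵀU)^{1/r}`. -/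
theorem sq_specNorm_ge_one_sub_det_rpow
    {d r t : ℕ} (U : Matrix (Fin d) (Fin r) ℝ) (V : Matrix (Fin d) (Fin t) ℝ)
    (hU : Uᵀ * U = 1) (hV : Vᵀ * V = 1) :
    0 ≤ ((1 : Matrix (Fin r) (Fin r) ℝ) - Uᵀ * V * Vᵀ * U).det ∧
    ((1 : Matrix (Fin r) (Fin r) ℝ) - Uᵀ * V * Vᵀ * U).det ≤ 1 ∧
    1 - ((1 : Matrix (Fin r) (Fin r) ℝ) - Uᵀ * V * Vᵀ * U).det ^ ((1 : ℝ) / r) ≤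
      specNorm (Vᵀ * U) ^ 2 := by
  set B := Vᵀ * U
  have hBB : Uᵀ * V * Vᵀ * U = Bᵀ * B := by simp [B, Matrix.mul_assoc]
  have hN := posSemidef_one_sub_transpose_mul_of_orthonormal hU hV
  have hdet : (1 - Bᵀ * B).det = ∏ i, hN.1.eigenvalues i := hN.1.det_eq_prod_eigenvalues
  rw [hBB]
  refine ⟨hN.det_nonneg, ?_, ?_⟩
  · rw [hdet]
    exact Finset.prod_le_one (fun i _ => hN.eigenvalues_nonneg i)
      fun i _ => hN.1.eigenvalues_one_sub_transpose_mul_le_one i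
  obtain rfl | hr := Nat.eq_zero_or_pos r
  · -- `(1 : ℝ) / 0 = 0`, so the root is `det ^ 0 = 1`
    simp [sq_nonneg]
  have : Nonempty (Fin r) := Fin.pos_iff_nonempty.mp hr
  have hgm := le_prod_rpow_one_div_card hN.eigenvalues_nonneg
    (one_sub_sq_specNorm_le_eigenvalues hN.1)
  rw [Fintype.card_fin, ← hdet] at hgm
  linarith
end
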